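/- For every Lb*-formula A, d(A⁺) ≤ ord(A) and d(A⁻) + prod(A⁻) ≤ ord(A), where d is the connective alternation depth of the translated expression and ord is the order of the formula. Consequently, for any sequent Γ → C, d(Ω_{Γ→C}) ≤ ord(Γ → C). -/

import Mathlib

/-- Formulas of the Lambek calculus with brackets: variables, product `A·B`,
left division `A\B`, right division `B/A`, and the bracket modalities `⟨⟩A`
and `[]⁻¹A`. -/
inductive Fm where
  | var : ℕ → Fm
  | mul : Fm → Fm → Fm        -- A · B
  | ldiv : Fm → Fm → Fm       -- A \ B
  | rdiv : Fm → Fm → Fm       -- B / A   (rdiv B A)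
  | dia : Fm → Fm             -- ⟨⟩A
  | box : Fm → Fm             -- []⁻¹A

/-- Literals: `p_i`, `p̄_i`, `[`, `]`, `[̄`, `]̄`. -/
inductive Lit where
  | pos : ℕ → Lit
  | neg : ℕ → Lit
  | lb | rb | lbBar | rbBar

/-- Expressions over literals built with `⅋` (`par`), `⊗` (`tens`) and the
metasyntactic `◇` (`sdia`). -/
inductive Expr where
  | lit : Lit → Expr
  | par : Expr → Expr → Expr
  | tens : Expr → Expr → Expr
  | sdia : Expr → Expr → Expr

mutual
/-- Positive translation `A⁺`. -/
def posE : Fm → Expr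
  | .var i => .lit (.pos i)
  | .mul A B => .tens (posE A) (posE B)
  | .ldiv A B => .par (negE A) (posE B)
  | .rdiv B A => .par (posE B) (negE A)
  | .dia A => .tens (.lit .rb) (.tens (posE A) (.lit .lb))          -- ] ⊗ A⁺ ⊗ [
  | .box A => .par (.par (.lit .rbBar) (posE A)) (.lit .lbBar)      -- ]̄ ⅋ A⁺ ⅋ [̄
/-- Negative translation `A⁻`. -/
def negE : Fm → Expr
  | .var i => .lit (.neg i)
  | .mul A B => .par (negE B) (negE A)
  | .ldiv A B => .tens (negE B) (posE A)
  | .rdiv B A => .tens (posE A) (negE B)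
  | .dia A => .par (.par (.lit .lbBar) (negE A)) (.lit .rbBar)      -- [̄ ⅋ A⁻ ⅋ ]̄
  | .box A => .tens (.lit .lb) (.tens (negE A) (.lit .rb))          -- [ ⊗ A⁻ ⊗ ]
end


/-- `prod(A)`: `1` if `A` is a product `A₁·A₂` or `⟨⟩A₁`, else `0`. -/
def prodF : Fm → ℕ
  | .mul _ _ => 1
  | .dia _ => 1
  | _ => 0

/-- The order of a formula. -/
def ordF : Fm → ℕ
  | .var _ => 0
  | .mul A B => max (ordF A) (ordF B)
  | .ldiv A B => max (ordF A + 1) (ordF B + prodF B)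
  | .rdiv B A => max (ordF A + 1) (ordF B + prodF B)
  | .dia A => ordF A
  | .box A => max (ordF A + prodF A) 1

/-- `prod(γ)` for translated expressions: `1` iff the root is `⊗`. -/
def prodE : Expr → ℕ
  | .tens _ _ => 1
  | _ => 0

/-- The connective alternation depth `d(γ)`. -/
def dE : Expr → ℕ
  | .lit _ => 0
  | .par a b => max (dE a + prodE a) (dE b + prodE b)
  | .sdia a b => max (dE a + prodE a) (dE b + prodE b)
  | .tens a b => max (dE a) (dE b)

/-- Items of a configuration: formulas or bracketed configurations. -/
inductive Item where
  | fml : Fm → Item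
  | brk : List Item → Item

/-- Configurations (meta-formulas): sequences of items. -/
abbrev Cfg := List Item

mutual
/-- The order of an item. -/
def ordI : Item → ℕ
  | .fml A => ordF A
  | .brk Γ => ordC Γ
/-- The order of a configuration. -/
def ordC : Cfg → ℕ
  | [] => 0
  | x :: xs => max (ordI x) (ordC xs)
end

mutual
/-- The `◇`-separated components of the negative translation of an item
(in the reversed order used by the translation, brackets contributing the
literals `[̄` and `]̄`). -/
def negItemC : Item → List Expr
  | .fml A => [negE A]
  | .brk Γ => Expr.lit .lbBar :: (negCfgC Γ ++ [Expr.lit .rbBar])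
/-- The `◇`-separated components of `Γ⁻`, using `(Γ,Δ)⁻ = Δ⁻ ◇ Γ⁻` and
`[Γ]⁻ = [̄ ◇ Γ⁻ ◇ ]̄`. -/
def negCfgC : Cfg → List Expr
  | [] => []
  | x :: xs => negCfgC xs ++ negItemC x
end

/-- The order of a sequent `Γ → C`. -/
def ordSeq (Γ : Cfg) (C : Fm) : ℕ := max (ordC Γ + 1) (ordF C + prodF C)

/-- `d(Ω_{Γ→C})`: the connective alternation depth of the translation
`◇Γ⁻◇C⁺`, i.e. the maximum over the top-level `◇`-separated components `γ` of
`d(γ) + prod(γ)`. -/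
def dOmega (Γ : Cfg) (C : Fm) : ℕ :=
  ((negCfgC Γ ++ [posE C]).map (fun γ => dE γ + prodE γ)).foldr max 0

lemma prodE_posE (A : Fm) : prodE (posE A) = prodF A := by
  cases A <;> rfl

/-- The third conjunct (the second one for `[]⁻¹A`) strengthens the induction: the division cases
need it, since `(A\B)⁻ = B⁻ ⊗ A⁺` puts `B⁻` under a `⊗`. -/
lemma dE_translations_le (A : Fm) :
    dE (posE A) ≤ ordF A ∧ dE (negE A) + prodE (negE A) ≤ ordF A ∧
      dE (negE A) + 1 ≤ ordF (.box A) := by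
  induction A with
  | var => simp [posE, negE, dE, ordF, prodE, prodF]
  | mul A B ihA ihB | ldiv A B ihA ihB | rdiv A B ihA ihB =>
    have := prodE_posE A
    have := prodE_posE B
    simp only [posE, negE, dE, ordF, prodE, prodF] at *
    omega
  | dia A ih | box A ih =>
    have := prodE_posE A
    simp only [posE, negE, dE, ordF, prodE, prodF] at *
    omega

lemma dE_posE_le (A : Fm) : dE (posE A) ≤ ordF A :=
  (dE_translations_le A).1

lemma dE_negE_add_prodE_le (A : Fm) : dE (negE A) + prodE (negE A) ≤ ordF A :=
  (dE_translations_le A).2.1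

mutual
lemma dE_add_prodE_le_ordI : ∀ (x : Item), ∀ γ ∈ negItemC x, dE γ + prodE γ ≤ ordI x
  | .fml A, γ, hγ => by
    rw [negItemC, List.mem_singleton] at hγ
    subst hγ
    exact dE_negE_add_prodE_le A
  | .brk Γ, γ, hγ => by
    simp only [negItemC, List.mem_cons, List.mem_append] at hγ
    rcases hγ with rfl | hΓ | rfl | hnil
    · exact Nat.zero_le _
    · exact dE_add_prodE_le_ordC Γ γ hΓ
    · exact Nat.zero_le _
    · exact absurd hnil List.not_mem_nil

lemma dE_add_prodE_le_ordC : ∀ (Γ : Cfg), ∀ γ ∈ negCfgC Γ, dE γ + prodE γ ≤ ordC Γ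
  | [], γ, hγ => absurd hγ List.not_mem_nil
  | x :: xs, γ, hγ => by
    rw [negCfgC, List.mem_append] at hγ
    rcases hγ with hxs | hx
    · exact (dE_add_prodE_le_ordC xs γ hxs).trans (le_max_right _ _)
    · exact (dE_add_prodE_le_ordI x γ hx).trans (le_max_left _ _)
end

lemma dOmega_le_ordSeq (Γ : Cfg) (C : Fm) : dOmega Γ C ≤ ordSeq Γ C := by
  refine List.max_le_of_forall_le _ _ fun n hn => ?_
  obtain ⟨γ, hγ, rfl⟩ := List.mem_map.1 hn
  rcases List.mem_append.1 hγ with hΓ | hC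
  · exact (dE_add_prodE_le_ordC Γ γ hΓ).trans (by unfold ordSeq; omega)
  · rw [List.mem_singleton.1 hC, prodE_posE]
    exact (Nat.add_le_add_right (dE_posE_le C) _).trans (le_max_right _ _)

/-- For every formula `A`, `d(A⁺) ≤ ord(A)` and `d(A⁻) + prod(A⁻) ≤ ord(A)`;
consequently, for any sequent `Γ → C`, `d(Ω_{Γ→C}) ≤ ord(Γ → C)`. -/
theorem stmt3 :
    (∀ A : Fm, dE (posE A) ≤ ordF A ∧ dE (negE A) + prodE (negE A) ≤ ordF A) ∧
    (∀ (Γ : Cfg) (C : Fm), dOmega Γ C ≤ ordSeq Γ C) :=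
  ⟨fun A => ⟨dE_posE_le A, dE_negE_add_prodE_le A⟩, dOmega_le_ordSeq⟩
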